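/- Let d be a positive integer dividing 2N, and set d⁻ = d/gcd(2,d). For a sequence of nonnegative integers (α_1,…,α_ℓ) with Σα_i ≤ N, the evaluation at q = ω_d (a primitive d-th root of unity) of the q²-multinomial coefficient [N choose α_1,…,α_ℓ]_{q²} equals the ordinary multinomial coefficient binom(N/d⁻; α_1/d⁻,…,α_ℓ/d⁻) if d divides 2α_i for all i, and equals 0 otherwise. -/

import Mathlib

open Finset Polynomial

/-- The Gaussian binomial coefficient `[n choose k]_q` as a polynomial in `q`. -/
noncomputable def qbinom : ℕ → ℕ → Polynomial ℤ
  | _, 0 => 1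
  | 0, _ + 1 => 0
  | n + 1, k + 1 => qbinom n k + Polynomial.X ^ (k + 1) * qbinom n (k + 1)

/-- The q-multinomial coefficient `[N choose ν]_q` as a polynomial in `q`;
it vanishes when the entries of `ν` sum to more than `N`. -/
noncomputable def qmultinom (N : ℕ) : List ℕ → Polynomial ℤ
  | [] => 1
  | a :: l => qbinom N a * qmultinom (N - a) l

/-! At a primitive `m`-th root of unity `q`, the absorption identity
`(1 - q^(k+1)) [n, k+1]_q = (1 - q^(n-k)) [n, k]_q` forces `[m, k]_q = 0` for `0 < k < m`.
Feeding this into the Pascal recurrence gives `[n + m, k]_q = [n, k]_q + [n, k - m]_q`, which is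
Pascal's rule for ordinary binomials in steps of `m`; hence `[m A, k]_q` is `binom(A, k / m)` when
`m ∣ k` and `0` otherwise (the case `m ∣ n` of the q-Lucas theorem). Factor by factor, the
q-multinomial at `q` is then the q-multinomial of the quotients by `m` evaluated at `1`, i.e. an
ordinary multinomial. For the theorem, `ω²` is a primitive `d / gcd(2, d)`-th root of unity and
`d ∣ 2x ↔ d / gcd(2, d) ∣ x`, both read off from orders of elements. -/

open scoped Nat

theorem Nat.sub_div_of_dvd {m a : ℕ} (N : ℕ) (h : m ∣ a) : (N - a) / m = N / m - a / m := by
  obtain ⟨c, rfl⟩ := h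
  rcases m.eq_zero_or_pos with rfl | hm
  · simp
  · rw [Nat.sub_mul_div, Nat.mul_div_cancel_left c hm]

theorem qbinom_zero_right (n : ℕ) : qbinom n 0 = 1 := by
  cases n <;> rfl

theorem qbinom_zero_succ (k : ℕ) : qbinom 0 (k + 1) = 0 := rfl

theorem qbinom_succ_succ (n k : ℕ) :
    qbinom (n + 1) (k + 1) = qbinom n k + X ^ (k + 1) * qbinom n (k + 1) := rfl

theorem qbinom_eq_zero_of_lt : ∀ {n k : ℕ}, n < k → qbinom n k = 0
  | 0, _ + 1, _ => rfl
  | n + 1, k + 1, h => by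
    rw [qbinom_succ_succ, qbinom_eq_zero_of_lt (by omega), qbinom_eq_zero_of_lt (by omega)]
    ring

theorem qbinom_self : ∀ n : ℕ, qbinom n n = 1
  | 0 => rfl
  | n + 1 => by
    rw [qbinom_succ_succ, qbinom_self n, qbinom_eq_zero_of_lt n.lt_succ_self]
    ring

theorem one_sub_X_pow_mul_qbinom_succ (n k : ℕ) :
    (1 - X ^ (k + 1)) * qbinom n (k + 1) = (1 - X ^ (n - k)) * qbinom n k := by
  induction n generalizing k with
  | zero => simp [qbinom_zero_succ]
  | succ n ih =>
    cases k with
    | zero =>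
      have ih0 := ih 0
      rw [Nat.sub_zero, qbinom_zero_right] at ih0
      rw [qbinom_succ_succ, qbinom_zero_right, qbinom_zero_right, Nat.sub_zero]
      linear_combination X * ih0
    | succ k =>
      rcases Nat.lt_or_ge k n with hkn | hnk
      · obtain ⟨j, rfl⟩ := Nat.exists_eq_add_of_lt hkn
        have ihk := ih k
        have ihk1 := ih (k + 1)
        rw [show k + j + 1 - k = j + 1 by omega] at ihk
        rw [show k + j + 1 - (k + 1) = j by omega] at ihk1
        rw [qbinom_succ_succ (k + j + 1) (k + 1), qbinom_succ_succ (k + j + 1) k,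
          show k + j + 1 + 1 - (k + 1) = j + 1 by omega]
        linear_combination X ^ (k + 2) * ihk1 + ihk
      · rw [qbinom_eq_zero_of_lt (by omega), Nat.sub_eq_zero_of_le (by omega)]
        ring

theorem eval_one_qbinom (n k : ℕ) : (qbinom n k).eval 1 = n.choose k := by
  induction n generalizing k with
  | zero => cases k <;> simp [qbinom_zero_right, qbinom_zero_succ]
  | succ n ih =>
    cases k with
    | zero => simp [qbinom_zero_right]
    | succ k => simp [qbinom_succ_succ, ih, Nat.choose_succ_succ']

theorem eval_one_qmultinom_mul_factorials : ∀ (l : List ℕ) {N : ℕ}, l.sum ≤ N →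
    (qmultinom N l).eval 1 * ((l.map Nat.factorial).prod * (N - l.sum)! : ℕ) = (N ! : ℤ)
  | [], N, _ => by simp [qmultinom]
  | a :: l, N, hl => by
    rw [List.sum_cons] at hl
    have ih := eval_one_qmultinom_mul_factorials l (N := N - a) (by omega)
    have hchoose : ((N.choose a * a ! * (N - a)! : ℕ) : ℤ) = N ! :=
      congrArg _ (Nat.choose_mul_factorial_mul_factorial (by omega))
    simp only [qmultinom, eval_mul, eval_one_qbinom, List.map_cons, List.prod_cons,
      List.sum_cons, Nat.sub_add_eq] at ih ⊢
    push_cast at ih hchoose ⊢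
    linear_combination ((N.choose a : ℤ) * a !) * ih + hchoose

theorem eval_one_qmultinom_eq_div {K : Type*} [Field K] [CharZero K] (l : List ℕ) {N : ℕ}
    (hl : l.sum ≤ N) :
    (((qmultinom N l).eval 1 : ℤ) : K) =
      N ! / ((l.map fun a => (a ! : K)).prod * (N - l.sum)!) := by
  have hprod : (l.map fun a => (a ! : K)).prod = ((l.map Nat.factorial).prod : ℕ) := by
    simp [Nat.cast_list_prod, Function.comp_def]
  have hpos : 0 < (l.map Nat.factorial).prod := List.prod_pos (by simp [Nat.factorial_pos])
  have h := congrArg (Int.cast : ℤ → K) (eval_one_qmultinom_mul_factorials l hl)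
  rw [Int.cast_mul, Int.cast_natCast, Int.cast_natCast, Nat.cast_mul] at h
  rw [hprod, eq_div_iff (mul_ne_zero (Nat.cast_ne_zero.2 hpos.ne')
    (Nat.cast_ne_zero.2 (Nat.factorial_ne_zero _)))]
  exact h

section RootOfUnity

variable {R : Type*} [CommRing R]

theorem aeval_qbinom_succ_succ (q : R) (n k : ℕ) :
    aeval q (qbinom (n + 1) (k + 1)) =
      aeval q (qbinom n k) + q ^ (k + 1) * aeval q (qbinom n (k + 1)) := by
  simp [qbinom_succ_succ]

variable [IsDomain R] {q : R} {m : ℕ}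

theorem IsPrimitiveRoot.aeval_qbinom_eq_zero (hq : IsPrimitiveRoot q m) :
    ∀ {k : ℕ}, 0 < k → k < m → aeval q (qbinom m k) = 0
  | k + 1, _, hkm => by
    have habs := congrArg (aeval q) (one_sub_X_pow_mul_qbinom_succ m k)
    simp only [map_mul, map_sub, map_one, map_pow, aeval_X] at habs
    have hrhs : (1 - q ^ (m - k)) * aeval q (qbinom m k) = 0 := by
      rcases k.eq_zero_or_pos with rfl | hk
      · simp [hq.pow_eq_one]
      · rw [hq.aeval_qbinom_eq_zero hk (by omega), mul_zero]
    have hne : 1 - q ^ (k + 1) ≠ 0 :=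
      sub_ne_zero.2 (hq.pow_ne_one_of_pos_of_lt k.succ_ne_zero hkm).symm
    exact (mul_eq_zero.1 (habs.trans hrhs)).resolve_left hne

theorem IsPrimitiveRoot.aeval_qbinom_add (hq : IsPrimitiveRoot q m) (hm : 0 < m) (n k : ℕ) :
    aeval q (qbinom (n + m) k) =
      aeval q (qbinom n k) + if m ≤ k then aeval q (qbinom n (k - m)) else 0 := by
  induction n generalizing k with
  | zero =>
    rcases Nat.lt_trichotomy k m with hkm | rfl | hmk
    · rcases k.eq_zero_or_pos with rfl | hk
      · simp [qbinom_zero_right, hm.ne']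
      · rw [zero_add, hq.aeval_qbinom_eq_zero hk hkm,
          qbinom_eq_zero_of_lt hk, if_neg hkm.not_ge, map_zero, add_zero]
    · simp [qbinom_self, qbinom_eq_zero_of_lt hm]
    · rw [zero_add, qbinom_eq_zero_of_lt hmk, qbinom_eq_zero_of_lt (by omega : 0 < k),
        qbinom_eq_zero_of_lt (by omega : 0 < k - m)]
      simp
  | succ n ih =>
    cases k with
    | zero => simp [qbinom_zero_right, hm.ne']
    | succ k =>
      rw [show n + 1 + m = n + m + 1 by omega, aeval_qbinom_succ_succ, ih, ih,
        aeval_qbinom_succ_succ]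
      rcases Nat.lt_trichotomy (k + 1) m with hkm | rfl | hmk
      · rw [if_neg (by omega), if_neg (by omega), if_neg (by omega)]
        ring
      · simp [hq.pow_eq_one, qbinom_zero_right]
        ring
      · obtain ⟨j, rfl⟩ := Nat.exists_eq_add_of_le (Nat.le_of_lt_succ hmk)
        rw [if_pos (by omega), if_pos (by omega), if_pos (by omega),
          show m + j + 1 - m = j + 1 by omega, Nat.add_sub_cancel_left, aeval_qbinom_succ_succ,
          show m + j + 1 = m + (j + 1) by omega, pow_add q m, hq.pow_eq_one]
        ring

theorem IsPrimitiveRoot.aeval_qbinom_of_dvd (hq : IsPrimitiveRoot q m) {n : ℕ} (hn : m ∣ n)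
    (k : ℕ) : aeval q (qbinom n k) = if m ∣ k then ((n / m).choose (k / m) : R) else 0 := by
  rcases m.eq_zero_or_pos with rfl | hm
  · rw [zero_dvd_iff.1 hn]
    cases k <;> simp [qbinom_zero_right, qbinom_zero_succ]
  obtain ⟨A, rfl⟩ := hn
  rw [Nat.mul_div_cancel_left A hm]
  induction A generalizing k with
  | zero =>
    cases k with
    | zero => simp [qbinom_zero_right]
    | succ k =>
      rw [mul_zero, qbinom_zero_succ, map_zero]
      split_ifs with hk
      · rw [Nat.choose_eq_zero_of_lt (Nat.div_pos (Nat.le_of_dvd k.succ_pos hk) hm),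
          Nat.cast_zero]
      · rfl
  | succ A ih =>
    rw [mul_add_one, hq.aeval_qbinom_add hm, ih]
    by_cases hmk : m ≤ k
    · obtain ⟨j, rfl⟩ := Nat.exists_eq_add_of_le hmk
      rw [if_pos hmk, Nat.add_sub_cancel_left, ih, Nat.add_div_left j hm, Nat.choose_succ_succ']
      simp only [Nat.dvd_add_self_left]
      split_ifs <;> push_cast <;> ring
    · rw [if_neg hmk, add_zero]
      rcases k.eq_zero_or_pos with rfl | hk
      · simp
      · simp [Nat.not_dvd_of_pos_of_lt hk (not_le.1 hmk)]

theorem IsPrimitiveRoot.aeval_qmultinom_of_dvd (hq : IsPrimitiveRoot q m) :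
    ∀ (l : List ℕ) {N : ℕ}, m ∣ N →
      aeval q (qmultinom N l) =
        if ∀ a ∈ l, m ∣ a then (((qmultinom (N / m) (l.map (· / m))).eval 1 : ℤ) : R)
        else 0
  | [], N, _ => by simp [qmultinom]
  | a :: l, N, hN => by
    rw [qmultinom, map_mul, hq.aeval_qbinom_of_dvd hN]
    simp only [List.forall_mem_cons]
    by_cases ha : m ∣ a
    · rw [hq.aeval_qmultinom_of_dvd l (Nat.dvd_sub hN ha), Nat.sub_div_of_dvd N ha]
      simp only [ha, true_and, if_true, List.map_cons, qmultinom, eval_mul, eval_one_qbinom]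
      split_ifs <;> push_cast <;> ring
    · simp [ha]

end RootOfUnity

theorem stmt_7_general (d N ℓ : ℕ) (hdN : d ∣ 2 * N) (α : Fin ℓ → ℕ)
    (hα : ∑ i, α i ≤ N) (ω : ℂ) (hω : IsPrimitiveRoot ω d) :
    Polynomial.aeval (ω ^ 2) (qmultinom N (List.ofFn α)) =
      if ∀ i, d ∣ 2 * α i then
        ((N / (d / Nat.gcd 2 d)).factorial : ℂ) /
          ((∏ i, ((α i / (d / Nat.gcd 2 d)).factorial : ℂ)) *
            ((N / (d / Nat.gcd 2 d) - ∑ i, α i / (d / Nat.gcd 2 d)).factorial : ℂ))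
      else 0 := by
  set m := d / Nat.gcd 2 d
  have hq : IsPrimitiveRoot (ω ^ 2) m := by
    have h := IsPrimitiveRoot.orderOf (ω ^ 2)
    rwa [orderOf_pow' ω two_ne_zero, ← hω.eq_orderOf, Nat.gcd_comm] at h
  have hdvd (x : ℕ) : d ∣ 2 * x ↔ m ∣ x := by
    rw [← hω.pow_eq_one_iff_dvd, ← hq.pow_eq_one_iff_dvd, pow_mul]
  rw [hq.aeval_qmultinom_of_dvd _ ((hdvd N).1 hdN)]
  simp only [List.forall_mem_ofFn_iff, hdvd]
  split_ifs with hα_dvd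
  · have hsum : ∑ i, α i / m ≤ N / m := by
      rw [← Nat.sum_div fun i _ => hα_dvd i]
      exact Nat.div_le_div_right hα
    rw [List.map_ofFn, eval_one_qmultinom_eq_div _ (by rwa [List.sum_ofFn]), List.map_ofFn,
      List.prod_ofFn, List.sum_ofFn]
    rfl
  · rfl

theorem stmt_7 (d N ℓ : ℕ) (hd : 0 < d) (hdN : d ∣ 2 * N) (α : Fin ℓ → ℕ)
    (hα : ∑ i, α i ≤ N) (ω : ℂ) (hω : IsPrimitiveRoot ω d) :
    Polynomial.aeval (ω ^ 2) (qmultinom N (List.ofFn α)) =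
      if ∀ i, d ∣ 2 * α i then
        ((N / (d / Nat.gcd 2 d)).factorial : ℂ) /
          ((∏ i, ((α i / (d / Nat.gcd 2 d)).factorial : ℂ)) *
            ((N / (d / Nat.gcd 2 d) - ∑ i, α i / (d / Nat.gcd 2 d)).factorial : ℂ))
      else 0 :=
  stmt_7_general d N ℓ hdN α hα ω hω
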